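/- arXiv:1003.2502 — 2 statements merged into one kernel-verified Lean document; each statement's English description precedes it below -/
import Mathlib

section
/- Let δ : [0, ∞) → (0, ∞) be a continuous positive function with δ(r) → 0 as r → ∞, and let g : [0, ∞) → ℝ solve the ODE g''(r) − δ(r) g(r) = 0 with g(0) = 0 and g'(0) = 1. Then g(r) → +∞ as r → ∞ and lim_{r→∞} g'(r)/g(r) = 0. -/
/-!
Since `(g g')' = g'² + δ g² ≥ 0`, the product `g g'` is nonnegative, so `(g'²)' = 2 δ g g' ≥ 0`
and `g'² ≥ 1`; as `g'` is continuous with `g'(0) = 1`, this forces `g' ≥ 1`, hence `g(r) ≥ r`.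
Once `δ ≤ ε²` on `[R, ∞)`, the function `e^{εr} (ε g − g')` has derivative `e^{εr} (ε² − δ) g ≥ 0`
there, which bounds `g' − ε g` from above by a constant; dividing by `g → ∞` gives
`limsup g'/g ≤ ε`.
-/

open Filter Topology Set

lemma monotoneOn_Ici_of_hasDerivWithinAt_nonneg {f f' : ℝ → ℝ} {a : ℝ}
    (hf : ∀ x, a ≤ x → HasDerivWithinAt f (f' x) (Ici a) x) (hf' : ∀ x, a < x → 0 ≤ f' x) :
    MonotoneOn f (Ici a) :=
  monotoneOn_of_hasDerivWithinAt_nonneg (convex_Ici a)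
    (fun x hx => (hf x hx).continuousWithinAt)
    (fun x hx => by
      rw [interior_Ici] at hx ⊢
      exact (hf x hx.le).mono Ioi_subset_Ici_self)
    (fun x hx => hf' x (by rwa [interior_Ici] at hx))

lemma tendsto_div_nhds_zero_of_le_mul_add {f g : ℝ → ℝ} (hg : Tendsto g atTop atTop)
    (hf : ∀ᶠ r in atTop, 0 ≤ f r) (hle : ∀ ε > 0, ∃ C, ∀ᶠ r in atTop, f r ≤ ε * g r + C) :
    Tendsto (fun r => f r / g r) atTop (𝓝 0) := by
  have hgpos : ∀ᶠ r in atTop, 0 < g r := hg.eventually_gt_atTop 0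
  refine tendsto_order.2 ⟨fun a ha => ?_, fun a ha => ?_⟩
  · filter_upwards [hf, hgpos] with r hfr hgr
    exact ha.trans_le (div_nonneg hfr hgr.le)
  · obtain ⟨C, hC⟩ := hle (a / 2) (half_pos ha)
    have hCg : ∀ᶠ r in atTop, C / g r < a / 2 :=
      (hg.inv_tendsto_atTop.const_mul C).eventually (gt_mem_nhds (by simpa using half_pos ha))
    filter_upwards [hC, hgpos, hCg] with r hCr hgr hCgr
    calc f r / g r ≤ (a / 2 * g r + C) / g r := by gcongr
      _ = a / 2 + C / g r := by field_simp
      _ < a := by linarith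

namespace GrowthODE

variable {δ g g' : ℝ → ℝ}

lemma mul_deriv_nonneg (hg0 : g 0 = 0)
    (hg : ∀ r, 0 ≤ r → HasDerivWithinAt g (g' r) (Ici 0) r)
    (hg' : ∀ r, 0 ≤ r → HasDerivWithinAt g' (δ r * g r) (Ici 0) r)
    (hδ : ∀ r, 0 ≤ r → 0 ≤ δ r) {r : ℝ} (hr : 0 ≤ r) :
    0 ≤ g r * g' r := by
  have hmono : MonotoneOn (fun x => g x * g' x) (Ici 0) :=
    monotoneOn_Ici_of_hasDerivWithinAt_nonneg (fun x hx => (hg x hx).mul (hg' x hx))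
      (fun x hx => by
        nlinarith [mul_self_nonneg (g' x), mul_nonneg (hδ x hx.le) (mul_self_nonneg (g x))])
  simpa [hg0] using hmono self_mem_Ici hr hr

lemma one_le_deriv_sq (hg0 : g 0 = 0) (hg'0 : g' 0 = 1)
    (hg : ∀ r, 0 ≤ r → HasDerivWithinAt g (g' r) (Ici 0) r)
    (hg' : ∀ r, 0 ≤ r → HasDerivWithinAt g' (δ r * g r) (Ici 0) r)
    (hδ : ∀ r, 0 ≤ r → 0 ≤ δ r) {r : ℝ} (hr : 0 ≤ r) :
    1 ≤ g' r ^ 2 := by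
  have hmono : MonotoneOn (fun x => g' x ^ 2) (Ici 0) := by
    refine monotoneOn_Ici_of_hasDerivWithinAt_nonneg (fun x hx => (hg' x hx).pow 2) ?_
    intro x hx
    have := mul_nonneg (hδ x hx.le) (mul_deriv_nonneg hg0 hg hg' hδ hx.le)
    simp only [Nat.cast_ofNat, Nat.reduceSub, pow_one]
    linarith
  simpa [hg'0] using hmono self_mem_Ici hr hr

lemma one_le_deriv (hg0 : g 0 = 0) (hg'0 : g' 0 = 1)
    (hg : ∀ r, 0 ≤ r → HasDerivWithinAt g (g' r) (Ici 0) r)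
    (hg' : ∀ r, 0 ≤ r → HasDerivWithinAt g' (δ r * g r) (Ici 0) r)
    (hδ : ∀ r, 0 ≤ r → 0 ≤ δ r) {r : ℝ} (hr : 0 ≤ r) :
    1 ≤ g' r := by
  by_contra! hlt
  have hneg : g' r < 0 := by nlinarith [one_le_deriv_sq hg0 hg'0 hg hg' hδ hr]
  have hcont : ContinuousOn g' (Icc 0 r) := fun x hx =>
    ((hg' x hx.1).continuousWithinAt).mono Icc_subset_Ici_self
  obtain ⟨c, hc, hgc⟩ :=
    intermediate_value_Icc' hr hcont ⟨hneg.le, by rw [hg'0]; exact zero_le_one⟩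
  have := one_le_deriv_sq hg0 hg'0 hg hg' hδ hc.1
  norm_num [hgc] at this

lemma self_le (hg0 : g 0 = 0) (hg'0 : g' 0 = 1)
    (hg : ∀ r, 0 ≤ r → HasDerivWithinAt g (g' r) (Ici 0) r)
    (hg' : ∀ r, 0 ≤ r → HasDerivWithinAt g' (δ r * g r) (Ici 0) r)
    (hδ : ∀ r, 0 ≤ r → 0 ≤ δ r) {r : ℝ} (hr : 0 ≤ r) :
    r ≤ g r := by
  have hmono : MonotoneOn (fun x => g x - x) (Ici 0) :=
    monotoneOn_Ici_of_hasDerivWithinAt_nonneg (fun x hx => (hg x hx).sub (hasDerivWithinAt_id x _))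
      (fun x hx => sub_nonneg.2 (one_le_deriv hg0 hg'0 hg hg' hδ hx.le))
  simpa [hg0] using hmono self_mem_Ici hr hr

lemma deriv_le_mul_add {ε R : ℝ} (hε : 0 < ε) (hR : 0 ≤ R)
    (hg : ∀ r, 0 ≤ r → HasDerivWithinAt g (g' r) (Ici 0) r)
    (hg' : ∀ r, 0 ≤ r → HasDerivWithinAt g' (δ r * g r) (Ici 0) r)
    (hgnn : ∀ r, 0 ≤ r → 0 ≤ g r) (hδR : ∀ r, R ≤ r → δ r ≤ ε ^ 2) :
    ∃ C, ∀ r, R ≤ r → g' r ≤ ε * g r + C := by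
  set φ : ℝ → ℝ := fun r => Real.exp (ε * r) * (ε * g r - g' r)
  have hφ : MonotoneOn φ (Ici R) := by
    refine monotoneOn_Ici_of_hasDerivWithinAt_nonneg
      (f' := fun x => Real.exp (ε * x) * ((ε ^ 2 - δ x) * g x)) (fun x hx => ?_) (fun x hx => ?_)
    · have hx0 : 0 ≤ x := hR.trans hx
      have hexp : HasDerivWithinAt (fun r => Real.exp (ε * r)) (Real.exp (ε * x) * ε) (Ici R) x :=
        ((hasDerivAt_id x).const_mul ε).exp.hasDerivWithinAt.congr_deriv (by simp)
      have hlin := ((hg x hx0).const_mul ε).sub (hg' x hx0)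
      exact (hexp.mul (hlin.mono fun y (hy : R ≤ y) => hR.trans hy)).congr_deriv
        (by simp only [Pi.sub_apply]; ring)
    · have := sub_nonneg.2 (hδR x hx.le)
      have := hgnn x (hR.trans hx.le)
      positivity
  refine ⟨max (-φ R) 0, fun r hr => ?_⟩
  have hφr : φ R ≤ φ r := hφ self_mem_Ici hr hr
  have hexp : 1 ≤ Real.exp (ε * r) := Real.one_le_exp (mul_nonneg hε.le (hR.trans hr))
  rcases le_or_gt (g' r - ε * g r) 0 with h | h
  · linarith [le_max_right (-φ R) 0]
  · calc g' r = ε * g r + (g' r - ε * g r) := by ring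
      _ ≤ ε * g r + Real.exp (ε * r) * (g' r - ε * g r) := by
        gcongr; exact le_mul_of_one_le_left h.le hexp
      _ = ε * g r + -φ r := by simp only [φ]; ring
      _ ≤ ε * g r + max (-φ R) 0 := by
        gcongr; exact (neg_le_neg hφr).trans (le_max_left _ _)

end GrowthODE

open GrowthODE in
theorem comparison_ode_tendsto_atTop_and_log_deriv_tendsto_zero_general
    (δ g g' : ℝ → ℝ)
    (hδpos : ∀ r, 0 ≤ r → 0 < δ r)
    (hδ0 : Tendsto δ atTop (𝓝 0))
    (hg0 : g 0 = 0) (hg'0 : g' 0 = 1)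
    (hg : ∀ r, 0 ≤ r → HasDerivWithinAt g (g' r) (Set.Ici 0) r)
    (hg' : ∀ r, 0 ≤ r → HasDerivWithinAt g' (δ r * g r) (Set.Ici 0) r) :
    Tendsto g atTop atTop ∧ Tendsto (fun r => g' r / g r) atTop (𝓝 0) := by
  have hδ : ∀ r, 0 ≤ r → 0 ≤ δ r := fun r hr => (hδpos r hr).le
  have hself : ∀ r, 0 ≤ r → r ≤ g r := fun r hr => self_le hg0 hg'0 hg hg' hδ hr
  have hgtop : Tendsto g atTop atTop :=
    tendsto_atTop_mono' atTop (eventually_atTop.2 ⟨0, hself⟩) tendsto_id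
  refine ⟨hgtop, tendsto_div_nhds_zero_of_le_mul_add hgtop ?_ fun ε hε => ?_⟩
  · exact eventually_atTop.2
      ⟨0, fun r hr => zero_le_one.trans (one_le_deriv hg0 hg'0 hg hg' hδ hr)⟩
  · obtain ⟨R, hR⟩ := eventually_atTop.1 (hδ0.eventually (gt_mem_nhds (pow_pos hε 2)))
    obtain ⟨C, hC⟩ := deriv_le_mul_add hε (le_max_right R 0) hg hg'
      (fun r hr => hr.trans (hself r hr)) (fun r hr => (hR r ((le_max_left R 0).trans hr)).le)
    exact ⟨C, eventually_atTop.2 ⟨_, hC⟩⟩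

/-- Lu–Zhou, inside the proof of Lemma 2.1: let `δ : [0,∞) → (0,∞)` be
continuous with `δ(r) → 0` as `r → ∞`, and let `g` solve `g'' − δ g = 0`, `g(0) = 0`,
`g'(0) = 1` (the derivative of `g` being `g'`).  Then `g(r) → +∞` and `g'(r)/g(r) → 0`
as `r → ∞`. -/
theorem comparison_ode_tendsto_atTop_and_log_deriv_tendsto_zero
    (δ g g' : ℝ → ℝ)
    (hδc : ContinuousOn δ (Set.Ici 0))
    (hδpos : ∀ r, 0 ≤ r → 0 < δ r)
    (hδ0 : Tendsto δ atTop (𝓝 0))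
    (hg0 : g 0 = 0) (hg'0 : g' 0 = 1)
    (hg : ∀ r, 0 ≤ r → HasDerivWithinAt g (g' r) (Set.Ici 0) r)
    (hg' : ∀ r, 0 ≤ r → HasDerivWithinAt g' (δ r * g r) (Set.Ici 0) r) :
    Tendsto g atTop atTop ∧ Tendsto (fun r => g' r / g r) atTop (𝓝 0) :=
  comparison_ode_tendsto_atTop_and_log_deriv_tendsto_zero_general δ g g' hδpos hδ0 hg0 hg'0 hg hg'
end

section
/- Let ε > 0, R > 0, and let f be a positive nonincreasing differentiable function on an interval [x₀ − R, ∞) satisfying 2ε f(x − R) − f'(x − R) ≥ 4ε f(x) for all x ≥ x₀. Then f(x − R) ≥ 2(1 − e^{−2εR}) f(x + R) for all x ≥ x₀; consequently, if 2(1 − e^{−2εR}) ≥ 5/4, then f(x − R) ≥ (5/4)^k f(x + (2k − 1)R) for every positive integer k and all x ≥ x₀. -/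
open Set

/-!
Fix `x ≥ x₀` and put `C = f (x + R)`. On `[x - R, x]` monotonicity gives `f (t + R) ≥ C`, so the
hypothesis becomes the linear differential inequality `(f - 2C)' ≤ 2ε (f - 2C)`. Grönwall's
inequality over an interval of length `R` yields `e^{-2εR} (f x - 2C) ≤ f (x - R) - 2C`, and
`f x ≥ C` turns this into `f (x - R) ≥ (2 - e^{-2εR}) C`. Applying the one-step bound at
`x, x + 2R, x + 4R, …` gives the geometric decay.
-/

theorem le_mul_exp_of_hasDerivWithinAt_le_mul {h h' : ℝ → ℝ} {a b K : ℝ} (hab : a ≤ b)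
    (hcont : ContinuousOn h (Icc a b))
    (hderiv : ∀ t ∈ Ico a b, HasDerivWithinAt h (h' t) (Ici t) t)
    (bound : ∀ t ∈ Ico a b, h' t ≤ K * h t) :
    h b ≤ h a * Real.exp (K * (b - a)) := by
  have := le_gronwallBound_of_liminf_deriv_right_le hcont
    (fun t ht _ hr => (hderiv t ht).liminf_right_slope_le hr) le_rfl
    (fun t ht => (bound t ht).trans_eq (add_zero _).symm) b ⟨hab, le_rfl⟩
  rwa [gronwallBound_ε0] at this

theorem two_sub_exp_mul_le_of_differential_inequality {ε R x₀ : ℝ} {f f' : ℝ → ℝ}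
    (hε : 0 ≤ ε) (hR : 0 ≤ R)
    (hderiv : ∀ x ∈ Ici (x₀ - R), HasDerivWithinAt f (f' x) (Ici (x₀ - R)) x)
    (hfmono : AntitoneOn f (Ici (x₀ - R)))
    (hineq : ∀ x : ℝ, x₀ ≤ x → 4 * ε * f x ≤ 2 * ε * f (x - R) - f' (x - R))
    {x : ℝ} (hx : x₀ ≤ x) :
    (2 - Real.exp (-2 * ε * R)) * f (x + R) ≤ f (x - R) := by
  set C := f (x + R)
  have hsub : Icc (x - R) x ⊆ Ici (x₀ - R) := fun t ht => by simp only [mem_Ici]; linarith [ht.1]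
  have hderivRight : ∀ t ∈ Ico (x - R) x, HasDerivWithinAt f (f' t) (Ici t) t := fun t ht =>
    have ht' := hsub (Ico_subset_Icc_self ht)
    (hderiv t ht').mono (Ici_subset_Ici.2 ht')
  have hgronwall : f x - 2 * C ≤ (f (x - R) - 2 * C) * Real.exp (2 * ε * (x - (x - R))) := by
    refine le_mul_exp_of_hasDerivWithinAt_le_mul (h := fun t => f t - 2 * C) (by linarith)
      (((HasDerivWithinAt.continuousOn hderiv).mono hsub).sub continuousOn_const)
      (fun t ht => (hderivRight t ht).sub_const _) (fun t ht => ?_)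
    have hmem : ∀ s, t ≤ s → s ∈ Ici (x₀ - R) := fun s hs => by
      simp only [mem_Ici]; linarith [ht.1]
    have hshift := hineq (t + R) (by linarith [ht.1])
    rw [add_sub_cancel_right] at hshift
    have hC : C ≤ f (t + R) :=
      hfmono (hmem _ (by linarith)) (hmem _ (by linarith [ht.2])) (by linarith [ht.2])
    show f' t ≤ 2 * ε * (f t - 2 * C)
    linarith [mul_le_mul_of_nonneg_left hC (by positivity : 0 ≤ 4 * ε)]
  rw [sub_sub_cancel] at hgronwall
  have hstep : Real.exp (-2 * ε * R) * (f x - 2 * C) ≤ f (x - R) - 2 * C := by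
    calc Real.exp (-2 * ε * R) * (f x - 2 * C)
        ≤ Real.exp (-2 * ε * R) * ((f (x - R) - 2 * C) * Real.exp (2 * ε * R)) :=
          mul_le_mul_of_nonneg_left hgronwall (Real.exp_pos _).le
      _ = f (x - R) - 2 * C := by
        rw [mul_left_comm, ← Real.exp_add, neg_mul, neg_mul, neg_add_cancel, Real.exp_zero,
          mul_one]
  have hCx : C ≤ f x := hfmono (hsub ⟨by linarith, le_rfl⟩) (by simp only [mem_Ici]; linarith)
    (by linarith)
  linarith [mul_le_mul_of_nonneg_left hCx (Real.exp_pos (-2 * ε * R)).le]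

theorem pow_mul_le_of_forall_mul_le {f : ℝ → ℝ} {q R x₀ : ℝ} (hq : 0 ≤ q) (hR : 0 ≤ R)
    (hstep : ∀ x : ℝ, x₀ ≤ x → q * f (x + R) ≤ f (x - R)) {k : ℕ} (hk : 0 < k) :
    ∀ x : ℝ, x₀ ≤ x → q ^ k * f (x + (2 * (k : ℝ) - 1) * R) ≤ f (x - R) := by
  induction k, hk using Nat.le_induction with
  | base => norm_num; exact hstep
  | succ k _ ih =>
    intro x hx
    have hfar := ih (x + 2 * R) (by linarith)
    rw [show x + 2 * R - R = x + R by ring,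
      show x + 2 * R + (2 * (k : ℝ) - 1) * R = x + (2 * ((k + 1 : ℕ) : ℝ) - 1) * R by
        push_cast; ring] at hfar
    calc q ^ (k + 1) * f (x + (2 * ((k + 1 : ℕ) : ℝ) - 1) * R)
        = q * (q ^ k * f (x + (2 * ((k + 1 : ℕ) : ℝ) - 1) * R)) := by ring
      _ ≤ q * f (x + R) := mul_le_mul_of_nonneg_left hfar hq
      _ ≤ f (x - R) := hstep x hx

/-- Lu–Zhou, iteration argument in the proof of Theorem 3.1: let
`ε, R > 0` and let `f` be a positive nonincreasing differentiable function on
`[x₀ − R, ∞)` (with derivative `f'`) satisfying `2ε f(x−R) − f'(x−R) ≥ 4ε f(x)` for all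
`x ≥ x₀`.  Then `f(x−R) ≥ 2(1 − e^{−2εR}) f(x+R)` for all `x ≥ x₀`; consequently, if
`2(1 − e^{−2εR}) ≥ 5/4`, then `f(x−R) ≥ (5/4)^k f(x+(2k−1)R)` for every positive integer
`k` and all `x ≥ x₀`. -/
theorem decay_iteration_of_differential_inequality
    (ε R x₀ : ℝ) (hε : 0 < ε) (hR : 0 < R)
    (f f' : ℝ → ℝ)
    (hderiv : ∀ x ∈ Ici (x₀ - R), HasDerivWithinAt f (f' x) (Ici (x₀ - R)) x)
    (hfpos : ∀ x ∈ Ici (x₀ - R), 0 < f x)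
    (hfmono : AntitoneOn f (Ici (x₀ - R)))
    (hineq : ∀ x : ℝ, x₀ ≤ x → 4 * ε * f x ≤ 2 * ε * f (x - R) - f' (x - R)) :
    (∀ x : ℝ, x₀ ≤ x → 2 * (1 - Real.exp (-2 * ε * R)) * f (x + R) ≤ f (x - R)) ∧
    (5 / 4 ≤ 2 * (1 - Real.exp (-2 * ε * R)) →
      ∀ x : ℝ, x₀ ≤ x → ∀ k : ℕ, 0 < k →
        (5 / 4 : ℝ) ^ k * f (x + (2 * (k : ℝ) - 1) * R) ≤ f (x - R)) := by
  have hpos : ∀ x : ℝ, x₀ ≤ x → 0 < f (x + R) := fun x hx =>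
    hfpos _ (by simp only [mem_Ici]; linarith)
  have hone : ∀ x : ℝ, x₀ ≤ x → 2 * (1 - Real.exp (-2 * ε * R)) * f (x + R) ≤ f (x - R) :=
    fun x hx => by
      have hstep :=
        two_sub_exp_mul_le_of_differential_inequality hε.le hR.le hderiv hfmono hineq hx
      linarith [mul_pos (Real.exp_pos (-2 * ε * R)) (hpos x hx)]
  refine ⟨hone, fun hc x hx k hk => ?_⟩
  refine pow_mul_le_of_forall_mul_le (by norm_num) hR.le (fun y hy => ?_) hk x hx
  exact (mul_le_mul_of_nonneg_right hc (hpos y hy).le).trans (hone y hy)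
end
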